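/- arXiv:2203.04527 — 7 statements merged into one kernel-verified Lean document; each statement's English description precedes it below -/
import Mathlib

section
/- Let T: H → H be α-averaged with α ∈ (0,1], x̄ ∈ Fix T, λ ∈ [0, 1/α], x ∈ H, and y = (1−λ)x + λTx. Then ‖Ty − y‖ ≤ ‖Tx − x‖. -/
variable {H : Type*} [NormedAddCommGroup H] [InnerProductSpace ℝ H] [CompleteSpace H]

/-- An operator is nonexpansive if it is 1-Lipschitz. -/
def Nonexpansive (T : H → H) : Prop := ∀ x y : H, ‖T x - T y‖ ≤ ‖x - y‖

/-- `T` is `α`-averaged: `T = (1-α)•Id + α•R` for some nonexpansive `R`. -/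
def Averaged (α : ℝ) (T : H → H) : Prop :=
  ∃ R : H → H, Nonexpansive R ∧ ∀ x : H, T x = (1 - α) • x + α • R x

/-- A set-valued operator is monotone. -/
def MonotoneOp (A : H → Set H) : Prop :=
  ∀ x u y v : H, u ∈ A x → v ∈ A y → (0 : ℝ) ≤ inner ℝ (x - y) (u - v)

/-- Maximal monotonicity. -/
def MaxMonotone (A : H → Set H) : Prop :=
  MonotoneOp A ∧ ∀ x u : H, (∀ y v : H, v ∈ A y → (0 : ℝ) ≤ inner ℝ (x - y) (u - v)) → u ∈ A x

/-- `J` is the resolvent of `γ • A`, i.e. `J = (Id + γA)⁻¹`: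
for every `x`, `(1/γ)(x - J x) ∈ A (J x)` (so `x ∈ (Id + γA)(J x)`). -/
def IsResolvent (γ : ℝ) (A : H → Set H) (J : H → H) : Prop :=
  ∀ x : H, γ⁻¹ • (x - J x) ∈ A (J x)

/-- Weak convergence of a sequence in a Hilbert space. -/
def WeakConv (y : ℕ → H) (p : H) : Prop :=
  ∀ u : H, Filter.Tendsto (fun k => (inner ℝ (y k) u : ℝ)) Filter.atTop (nhds (inner ℝ p u))


/-! Writing `T = (1 - α) Id + α R`, the relaxed point `y = x + λα (R x - x)` lies on the segment
`[x, R x]` because `λα ≤ 1`. Moving along that segment cannot increase the displacement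
`‖R z - z‖` (triangle inequality through `R x`), and the displacement of `T` is `α` times that
of `R`. -/

theorem LipschitzWith.dist_apply_le_of_mem_segment {E : Type*} [SeminormedAddCommGroup E]
    [NormedSpace ℝ E] {R : E → E} (hR : LipschitzWith 1 R) {x y : E}
    (hy : y ∈ segment ℝ x (R x)) : dist (R y) y ≤ dist (R x) x := by
  have hRyx : dist (R y) (R x) ≤ dist y x := by simpa using hR.dist_le_mul y x
  calc dist (R y) y ≤ dist (R y) (R x) + dist (R x) y := dist_triangle _ _ _
    _ ≤ dist y x + dist (R x) y := by gcongr
    _ = dist (R x) x := by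
      rw [dist_comm y x, dist_comm (R x) y, dist_add_dist_of_mem_segment hy, dist_comm]

theorem Nonexpansive.lipschitzWith {E : Type*} [NormedAddCommGroup E] {R : E → E}
    (hR : Nonexpansive R) : LipschitzWith 1 R :=
  LipschitzWith.mk_one fun x y => by simpa only [dist_eq_norm] using hR x y

theorem stmt2_general (α : ℝ) (hα0 : 0 < α) (T : H → H) (hT : Averaged α T)
    (lam : ℝ) (hlam0 : 0 ≤ lam) (hlam1 : lam ≤ 1 / α)
    (x : H) (y : H) (hy : y = (1 - lam) • x + lam • T x) :
    ‖T y - y‖ ≤ ‖T x - x‖ := by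
  obtain ⟨R, hR, hTR⟩ := hT
  have hdisp : ∀ z, T z - z = α • (R z - z) := fun z => by rw [hTR]; module
  have hseg : y ∈ segment ℝ x (R x) :=
    ⟨1 - lam * α, lam * α, by linarith [(le_div_iff₀ hα0).mp hlam1], by positivity, by ring,
      by rw [hy, hTR]; module⟩
  have hRdisp : ‖R y - y‖ ≤ ‖R x - x‖ := by
    simpa only [dist_eq_norm] using hR.lipschitzWith.dist_apply_le_of_mem_segment hseg
  rw [hdisp, hdisp, norm_smul, norm_smul]
  gcongr

theorem stmt2 (α : ℝ) (hα0 : 0 < α) (hα1 : α ≤ 1) (T : H → H) (hT : Averaged α T)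
    (xb : H) (hxb : T xb = xb) (lam : ℝ) (hlam0 : 0 ≤ lam) (hlam1 : lam ≤ 1 / α)
    (x : H) (y : H) (hy : y = (1 - lam) • x + lam • T x) :
    ‖T y - y‖ ≤ ‖T x - x‖ :=
  stmt2_general α hα0 T hT lam hlam0 hlam1 x y hy
end

section
/- Let T: H → H be α-averaged with α ∈ (0,1] and Fix T ≠ ∅, let λ ∈ (0, 1/α), F_λ = (1−λ)Id + λT. Suppose Id − T is metrically subregular at x̄ ∈ Fix T for 0: there exist κ > 0 and δ > 0 such that d(x, Fix T) ≤ κ‖x − Tx‖ for all x with ‖x − x̄‖ ≤ δ. Set ρ = (1 − λ(1−λα)/(ακ²))^{1/2}. Then ρ ∈ [0,1) and for every x with ‖x − x̄‖ ≤ δ: d(F_λ x, Fix T) ≤ ρ d(x, Fix T). -/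
/-!
An `α`-averaged map `T = (1-α) Id + α R` satisfies, for every fixed point `z`,
`‖T x - z‖² + (1-α)/α ‖x - T x‖² ≤ ‖x - z‖²`. The relaxation `F_λ = (1-λ) Id + λ T` is again
averaged, with constant `λα` and the same `R`, and has the same fixed points. Taking the infimum
over fixed points gives `d(F_λ x)² + λ(1-λα)/α ‖x - T x‖² ≤ d(x)²`, and metric subregularity bounds
the residual from below by `d(x)²/κ²`, so `d(F_λ x)² ≤ ρ² d(x)²`.
-/

open Metric

variable {H : Type*} [NormedAddCommGroup H] [InnerProductSpace ℝ H] [CompleteSpace H]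

theorem le_sq_infDist_of_forall_le_sq_dist {X : Type*} [PseudoMetricSpace X] {s : Set X}
    (hs : s.Nonempty) {x : X} {r : ℝ} (h : ∀ y ∈ s, r ≤ dist x y ^ 2) :
    r ≤ infDist x s ^ 2 := by
  by_contra! hlt
  have hlt' : infDist x s < √r := (Real.lt_sqrt infDist_nonneg).mpr hlt
  obtain ⟨y, hy, hxy⟩ := (infDist_lt_iff hs).mp hlt'
  exact (h y hy).not_gt ((Real.lt_sqrt dist_nonneg).mp hxy)

theorem le_sqrt_mul_of_sq_le_mul_sq {a b t : ℝ} (ha : 0 ≤ a) (hb : 0 ≤ b)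
    (h : a ^ 2 ≤ t * b ^ 2) : a ≤ √t * b :=
  calc a = √(a ^ 2) := (Real.sqrt_sq ha).symm
    _ ≤ √(t * b ^ 2) := Real.sqrt_le_sqrt h
    _ = √t * b := by rw [Real.sqrt_mul' t (sq_nonneg b), Real.sqrt_sq hb]

section

omit [CompleteSpace H]

theorem norm_one_sub_smul_add_smul_sq (t : ℝ) (a b : H) :
    ‖(1 - t) • a + t • b‖ ^ 2 =
      (1 - t) * ‖a‖ ^ 2 + t * ‖b‖ ^ 2 - t * (1 - t) * ‖a - b‖ ^ 2 := by
  simp only [← real_inner_self_eq_norm_sq, inner_add_add_self, inner_sub_sub_self,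
    real_inner_smul_left, real_inner_smul_right, real_inner_comm a b]
  ring

namespace Averaged

variable {α : ℝ} {T : H → H}

theorem relax (hT : Averaged α T) (lam : ℝ) :
    Averaged (lam * α) (fun x => (1 - lam) • x + lam • T x) := by
  obtain ⟨R, hR, hTR⟩ := hT
  exact ⟨R, hR, fun x => by simp only [hTR]; module⟩

theorem sq_norm_sub_add_le (hT : Averaged α T) (hα : 0 < α) (x : H) {z : H} (hz : T z = z) :
    ‖T x - z‖ ^ 2 + (1 - α) / α * ‖x - T x‖ ^ 2 ≤ ‖x - z‖ ^ 2 := by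
  obtain ⟨R, hR, hTR⟩ := hT
  have hRz : R z = z := by
    have h : α • (R z - z) = 0 := by
      calc α • (R z - z) = ((1 - α) • z + α • R z) - z := by module
        _ = 0 := by rw [← hTR, hz, sub_self]
    exact sub_eq_zero.mp ((smul_eq_zero.mp h).resolve_left hα.ne')
  have hRx : ‖R x - z‖ ^ 2 ≤ ‖x - z‖ ^ 2 := by
    simpa only [hRz] using pow_le_pow_left₀ (norm_nonneg _) (hR x z) 2
  have hTx : T x - z = (1 - α) • (x - z) + α • (R x - z) := by rw [hTR]; module
  have hres : x - T x = α • (x - R x) := by rw [hTR]; module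
  have hresid : (1 - α) / α * ‖x - T x‖ ^ 2 = α * (1 - α) * ‖x - R x‖ ^ 2 := by
    rw [hres, norm_smul, mul_pow, Real.norm_eq_abs, sq_abs]
    field_simp
  rw [hTx, norm_one_sub_smul_add_smul_sq, hresid, sub_sub_sub_cancel_right]
  linarith [mul_le_mul_of_nonneg_left hRx hα.le]

theorem sq_infDist_add_le (hT : Averaged α T) (hα : 0 < α) {S : Set H} (hS : S.Nonempty)
    (hfix : ∀ z ∈ S, T z = z) (x : H) :
    infDist (T x) S ^ 2 + (1 - α) / α * ‖x - T x‖ ^ 2 ≤ infDist x S ^ 2 := by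
  refine le_sq_infDist_of_forall_le_sq_dist hS fun z hz => ?_
  have hTz : infDist (T x) S ^ 2 ≤ ‖T x - z‖ ^ 2 := by
    rw [← dist_eq_norm]
    exact pow_le_pow_left₀ infDist_nonneg (infDist_le_dist_of_mem hz) 2
  rw [dist_eq_norm]
  linarith [hT.sq_norm_sub_add_le hα x (hfix z hz)]

end Averaged

end

theorem stmt8_general (α : ℝ) (hα0 : 0 < α) (T : H → H) (hT : Averaged α T)
    (lam : ℝ) (hlam0 : 0 < lam) (hlam1 : lam < 1 / α)
    (F : H → H) (hF : ∀ x : H, F x = (1 - lam) • x + lam • T x)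
    (xb : H) (hxb : T xb = xb) (κ δ : ℝ) (hκ : 0 < κ)
    (hsub : ∀ x : H, ‖x - xb‖ ≤ δ → Metric.infDist x {z : H | T z = z} ≤ κ * ‖x - T x‖) :
    0 ≤ Real.sqrt (1 - lam * (1 - lam * α) / (α * κ ^ 2)) ∧
    Real.sqrt (1 - lam * (1 - lam * α) / (α * κ ^ 2)) < 1 ∧
    ∀ x : H, ‖x - xb‖ ≤ δ →
      Metric.infDist (F x) {z : H | T z = z} ≤
        Real.sqrt (1 - lam * (1 - lam * α) / (α * κ ^ 2)) *
          Metric.infDist x {z : H | T z = z} := by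
  have hlamα : 0 < 1 - lam * α := by rw [lt_div_iff₀ hα0] at hlam1; linarith
  have hc : 0 < lam * (1 - lam * α) / (α * κ ^ 2) := by positivity
  refine ⟨Real.sqrt_nonneg _, (Real.sqrt_lt' one_pos).mpr (by linarith), fun x hx => ?_⟩
  set S := {z : H | T z = z}
  have hF' : F = fun x => (1 - lam) • x + lam • T x := funext hF
  have hFS : ∀ z ∈ S, F z = z := fun z hz => by
    rw [hF, show T z = z from hz]; module
  have hdecr := (hF' ▸ hT.relax lam).sq_infDist_add_le (mul_pos hlam0 hα0) (S := S)
    ⟨xb, hxb⟩ hFS x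
  have hres : (1 - lam * α) / (lam * α) * ‖x - F x‖ ^ 2 =
      lam * (1 - lam * α) / α * ‖x - T x‖ ^ 2 := by
    rw [show x - F x = lam • (x - T x) by rw [hF]; module, norm_smul, mul_pow,
      Real.norm_eq_abs, sq_abs]
    field_simp
  have hsubsq : infDist x S ^ 2 ≤ κ ^ 2 * ‖x - T x‖ ^ 2 := by
    rw [← mul_pow]; exact pow_le_pow_left₀ infDist_nonneg (hsub x hx) 2
  have hresid : lam * (1 - lam * α) / (α * κ ^ 2) * infDist x S ^ 2 ≤
      lam * (1 - lam * α) / α * ‖x - T x‖ ^ 2 := by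
    calc _ ≤ lam * (1 - lam * α) / (α * κ ^ 2) * (κ ^ 2 * ‖x - T x‖ ^ 2) := by gcongr
      _ = _ := by field_simp
  exact le_sqrt_mul_of_sq_le_mul_sq infDist_nonneg infDist_nonneg (by linarith)

theorem stmt8 (α : ℝ) (hα0 : 0 < α) (hα1 : α ≤ 1) (T : H → H) (hT : Averaged α T)
    (hFix : ∃ x : H, T x = x) (lam : ℝ) (hlam0 : 0 < lam) (hlam1 : lam < 1 / α)
    (F : H → H) (hF : ∀ x : H, F x = (1 - lam) • x + lam • T x)
    (xb : H) (hxb : T xb = xb) (κ δ : ℝ) (hκ : 0 < κ) (hδ : 0 < δ)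
    (hsub : ∀ x : H, ‖x - xb‖ ≤ δ → Metric.infDist x {z : H | T z = z} ≤ κ * ‖x - T x‖) :
    0 ≤ Real.sqrt (1 - lam * (1 - lam * α) / (α * κ ^ 2)) ∧
    Real.sqrt (1 - lam * (1 - lam * α) / (α * κ ^ 2)) < 1 ∧
    ∀ x : H, ‖x - xb‖ ≤ δ →
      Metric.infDist (F x) {z : H | T z = z} ≤
        Real.sqrt (1 - lam * (1 - lam * α) / (α * κ ^ 2)) *
          Metric.infDist x {z : H | T z = z} :=
  stmt8_general α hα0 T hT lam hlam0 hlam1 F hF xb hxb κ δ hκ hsub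
end

section
/- Let A: H → 2^H be maximally monotone with zer A ≠ ∅, x̄ ∈ zer A, γ > 0. If A is metrically subregular at x̄ for 0 with constant κ on B[x̄;δ] (i.e., d(x, A⁻¹0) ≤ κ d(0, Ax) for all x ∈ B[x̄;δ]), then for all x ∈ B[x̄;δ]: d(x, (Id − J_{γA})⁻¹0) ≤ (1 + κ/γ)‖x − J_{γA}x‖. -/
variable {H : Type*} [NormedAddCommGroup H] [InnerProductSpace ℝ H] [CompleteSpace H]

/-! `J` is nonexpansive and fixes `xb`, so `J x` stays in the ball where subregularity holds.
Since `(x - J x) / γ ∈ A (J x)`, subregularity at `J x` gives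
`d(J x, zer A) ≤ (κ / γ) ‖x - J x‖`; the triangle inequality through `J x` and
`Fix J = zer A` finish the estimate. -/

namespace IsResolvent

variable {E : Type*} [NormedAddCommGroup E] [InnerProductSpace ℝ E]
  {A : E → Set E} {J : E → E} {γ : ℝ}

theorem sub_eq_zero_iff_zero_mem (hA : MonotoneOp A) (hγ : 0 < γ) (hJ : IsResolvent γ A J)
    (z : E) : z - J z = 0 ↔ (0 : E) ∈ A z := by
  constructor
  · intro hz
    simpa [(sub_eq_zero.mp hz).symm] using hJ z
  · intro h0
    have hm := hA (J z) (γ⁻¹ • (z - J z)) z 0 (hJ z) h0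
    rw [sub_zero, real_inner_smul_right, ← neg_sub, inner_neg_left,
      real_inner_self_eq_norm_sq] at hm
    have : ‖z - J z‖ ^ 2 ≤ 0 := by nlinarith [inv_pos.mpr hγ]
    exact norm_eq_zero.mp (by nlinarith [norm_nonneg (z - J z)])

theorem norm_sub_sq_le_inner (hA : MonotoneOp A) (hγ : 0 < γ) (hJ : IsResolvent γ A J)
    (x y : E) : ‖J x - J y‖ ^ 2 ≤ inner ℝ (J x - J y) (x - y) := by
  have hm := hA (J x) (γ⁻¹ • (x - J x)) (J y) (γ⁻¹ • (y - J y)) (hJ x) (hJ y)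
  rw [← smul_sub, real_inner_smul_right] at hm
  have hsplit : x - y = (x - J x - (y - J y)) + (J x - J y) := by abel
  rw [hsplit, inner_add_right, real_inner_self_eq_norm_sq]
  nlinarith [inv_pos.mpr hγ]

theorem nonexpansive (hA : MonotoneOp A) (hγ : 0 < γ) (hJ : IsResolvent γ A J) :
    Nonexpansive J := fun x y => by
  have h := (hJ.norm_sub_sq_le_inner hA hγ x y).trans (real_inner_le_norm _ _)
  nlinarith [norm_nonneg (J x - J y), norm_nonneg (x - y)]

theorem infDist_zero_le (hγ : 0 < γ) (hJ : IsResolvent γ A J) (x : E) :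
    Metric.infDist 0 (A (J x)) ≤ γ⁻¹ * ‖x - J x‖ := by
  simpa [dist_eq_norm, norm_smul, abs_of_pos hγ] using
    Metric.infDist_le_dist_of_mem (x := 0) (hJ x)

end IsResolvent

theorem stmt9_general (A : H → Set H) (hA : MaxMonotone A)
    (xb : H) (hxb : (0 : H) ∈ A xb) (γ : ℝ) (hγ : 0 < γ)
    (J : H → H) (hJ : IsResolvent γ A J)
    (κ δ : ℝ) (hκ : 0 < κ)
    (hsub : ∀ x : H, ‖x - xb‖ ≤ δ →
      Metric.infDist x {z : H | (0 : H) ∈ A z} ≤ κ * Metric.infDist (0 : H) (A x)) :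
    ∀ x : H, ‖x - xb‖ ≤ δ →
      Metric.infDist x {z : H | z - J z = 0} ≤ (1 + κ / γ) * ‖x - J x‖ := by
  intro x hx
  have hzeros : {z : H | z - J z = 0} = {z : H | (0 : H) ∈ A z} :=
    Set.ext (hJ.sub_eq_zero_iff_zero_mem hA.1 hγ)
  have hJxb : J xb = xb :=
    (sub_eq_zero.mp ((hJ.sub_eq_zero_iff_zero_mem hA.1 hγ xb).mpr hxb)).symm
  have hJx : ‖J x - xb‖ ≤ δ := (hJxb ▸ hJ.nonexpansive hA.1 hγ x xb).trans hx
  calc Metric.infDist x {z : H | z - J z = 0}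
      ≤ Metric.infDist (J x) {z : H | (0 : H) ∈ A z} + ‖x - J x‖ := by
        rw [hzeros, ← dist_eq_norm]; exact Metric.infDist_le_infDist_add_dist
    _ ≤ κ * (γ⁻¹ * ‖x - J x‖) + ‖x - J x‖ := by
        gcongr
        exact (hsub (J x) hJx).trans (by gcongr; exact hJ.infDist_zero_le hγ x)
    _ = (1 + κ / γ) * ‖x - J x‖ := by ring

theorem stmt9 (A : H → Set H) (hA : MaxMonotone A) (hz : ∃ x : H, (0 : H) ∈ A x)
    (xb : H) (hxb : (0 : H) ∈ A xb) (γ : ℝ) (hγ : 0 < γ)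
    (J : H → H) (hJ : IsResolvent γ A J)
    (κ δ : ℝ) (hκ : 0 < κ) (hδ : 0 < δ)
    (hsub : ∀ x : H, ‖x - xb‖ ≤ δ →
      Metric.infDist x {z : H | (0 : H) ∈ A z} ≤ κ * Metric.infDist (0 : H) (A x)) :
    ∀ x : H, ‖x - xb‖ ≤ δ →
      Metric.infDist x {z : H | z - J z = 0} ≤ (1 + κ / γ) * ‖x - J x‖ :=
  stmt9_general A hA xb hxb γ hγ J hJ κ δ hκ hsub
end

section
/- Let (G_k) be nonexpansive operators on H, (e_k) ⊂ H with ∑‖e_k‖ < ∞. Define y_{k+1} = G_k y_k + e_k and ξ_0(i) = y_i, ξ_{k+1}(i) = G_{k+i} ξ_k(i). Suppose for every i, (ξ_k(i))_k converges weakly to some ξ(i) ∈ H. Then (ξ(i))_i converges strongly to some ξ̄ ∈ H, and (y_k) converges weakly to ξ̄. -/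
variable {H : Type*} [NormedAddCommGroup H] [InnerProductSpace ℝ H] [CompleteSpace H]

/-!
The two sequences `k ↦ ξ k (i + 1)` and `k ↦ ξ (k + 1) i` are driven by the same nonexpansive
maps and start `‖e i‖` apart, so they stay `‖e i‖` apart; passing to weak limits gives
`‖ξ(i+1) - ξ(i)‖ ≤ ‖e i‖`, and summability of `‖e i‖` makes `(ξ(i))` Cauchy. Likewise
`y (k + i)` and `ξ k i` differ by at most the tail `∑_{j ≥ i} ‖e j‖`, so for large `i` the
sequence `y` is uniformly close to a sequence converging weakly to `ξ(i)`, which is close to `ξ̄`.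
-/

open Filter Topology

section Recursion

variable {E : Type*} [NormedAddCommGroup E]

theorem norm_xi_sub_xi_succ_le {G : ℕ → E → E} (hG : ∀ k, Nonexpansive (G k)) {e y : ℕ → E}
    (hy : ∀ k, y (k + 1) = G k (y k) + e k) {ξ : ℕ → ℕ → E} (hξ0 : ∀ i, ξ 0 i = y i)
    (hξ : ∀ k i, ξ (k + 1) i = G (k + i) (ξ k i)) (i k : ℕ) :
    ‖ξ k (i + 1) - ξ (k + 1) i‖ ≤ ‖e i‖ := by
  induction k with
  | zero => simp [hξ0, hy, hξ]
  | succ k ih =>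
    rw [hξ k (i + 1), hξ (k + 1) i, show k + 1 + i = k + (i + 1) by omega]
    exact (hG _ _ _).trans ih

theorem norm_y_sub_xi_le_sum {G : ℕ → E → E} (hG : ∀ k, Nonexpansive (G k)) {e y : ℕ → E}
    (hy : ∀ k, y (k + 1) = G k (y k) + e k) {ξ : ℕ → ℕ → E} (hξ0 : ∀ i, ξ 0 i = y i)
    (hξ : ∀ k i, ξ (k + 1) i = G (k + i) (ξ k i)) (i k : ℕ) :
    ‖y (k + i) - ξ k i‖ ≤ ∑ j ∈ Finset.range k, ‖e (j + i)‖ := by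
  induction k with
  | zero => simp [hξ0]
  | succ k ih =>
    rw [show k + 1 + i = k + i + 1 by omega, hy, hξ, Finset.sum_range_succ]
    calc ‖G (k + i) (y (k + i)) + e (k + i) - G (k + i) (ξ k i)‖
        ≤ ‖G (k + i) (y (k + i)) - G (k + i) (ξ k i)‖ + ‖e (k + i)‖ := by
          rw [add_sub_right_comm]; exact norm_add_le _ _
      _ ≤ ∑ j ∈ Finset.range k, ‖e (j + i)‖ + ‖e (k + i)‖ := by
          gcongr; exact (hG _ _ _).trans ih

end Recursion

theorem tendsto_of_dist_shift_le {X : Type*} [PseudoMetricSpace X] {g : ℕ → X}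
    {h : ℕ → ℕ → X} {L : ℕ → X} {l : X} {c : ℕ → ℝ} (hh : ∀ i, Tendsto (h i) atTop (𝓝 (L i)))
    (hL : Tendsto L atTop (𝓝 l)) (hc : Tendsto c atTop (𝓝 0))
    (hgh : ∀ i k, dist (g (k + i)) (h i k) ≤ c i) : Tendsto g atTop (𝓝 l) := by
  rw [Metric.tendsto_atTop]
  intro ε hε
  obtain ⟨i, hci, hLi⟩ := ((hc.eventually (gt_mem_nhds (by positivity : 0 < ε / 3))).and
    (Metric.tendsto_nhds.1 hL (ε / 3) (by positivity))).exists
  obtain ⟨K, hK⟩ := Metric.tendsto_atTop.1 (hh i) (ε / 3) (by positivity)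
  refine ⟨K + i, fun n hn => ?_⟩
  obtain ⟨k, rfl⟩ : ∃ k, n = k + i := ⟨n - i, by omega⟩
  have hhk := hK k (by omega)
  calc dist (g (k + i)) l ≤ dist (g (k + i)) (h i k) + dist (h i k) (L i) + dist (L i) l :=
        dist_triangle4 _ _ _ _
    _ < ε := by linarith [hgh i k]

section WeakConv

variable {F : Type*} [NormedAddCommGroup F] [InnerProductSpace ℝ F]

theorem WeakConv.comp_add {x : ℕ → F} {p : F} (hx : WeakConv x p) (m : ℕ) :
    WeakConv (fun k => x (k + m)) p :=
  fun u => (hx u).comp (tendsto_add_atTop_nat m)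

theorem WeakConv.norm_sub_le {a b : ℕ → F} {p q : F} {c : ℝ} (ha : WeakConv a p)
    (hb : WeakConv b q) (hab : ∀ k, ‖a k - b k‖ ≤ c) : ‖p - q‖ ≤ c := by
  set u := p - q
  have hlim : Tendsto (fun k => inner ℝ (a k - b k) u) atTop (𝓝 (‖u‖ ^ 2)) := by
    simp_rw [inner_sub_left, ← real_inner_self_eq_norm_sq, u, inner_sub_left]
    exact (ha u).sub (hb u)
  have hsq : ‖u‖ ^ 2 ≤ c * ‖u‖ :=
    le_of_tendsto hlim (Eventually.of_forall fun k =>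
      (real_inner_le_norm _ _).trans (mul_le_mul_of_nonneg_right (hab k) (norm_nonneg u)))
  rcases (norm_nonneg u).eq_or_lt with hu | hu
  · rw [← hu]; exact (norm_nonneg _).trans (hab 0)
  · nlinarith

theorem weakConv_of_norm_shift_le {x : ℕ → ℕ → F} {p : ℕ → F} {q : F} {y : ℕ → F}
    {c : ℕ → ℝ} (hx : ∀ i, WeakConv (x · i) (p i)) (hp : Tendsto p atTop (𝓝 q))
    (hc : Tendsto c atTop (𝓝 0)) (hyx : ∀ i k, ‖y (k + i) - x k i‖ ≤ c i) : WeakConv y q := by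
  intro u
  refine tendsto_of_dist_shift_le (c := fun i => c i * ‖u‖) (fun i => hx i u)
    (hp.inner tendsto_const_nhds) (by simpa using hc.mul_const ‖u‖) fun i k => ?_
  rw [Real.dist_eq, ← inner_sub_left]
  exact (abs_real_inner_le_norm _ _).trans (mul_le_mul_of_nonneg_right (hyx i k) (norm_nonneg u))

end WeakConv

theorem stmt12 (G : ℕ → H → H) (hG : ∀ k, Nonexpansive (G k))
    (e : ℕ → H) (he : Summable fun k => ‖e k‖)
    (y : ℕ → H) (hy : ∀ k, y (k + 1) = G k (y k) + e k)
    (ξ : ℕ → ℕ → H) (hξ0 : ∀ i, ξ 0 i = y i)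
    (hξ : ∀ k i, ξ (k + 1) i = G (k + i) (ξ k i))
    (ξlim : ℕ → H) (hweak : ∀ i, WeakConv (fun k => ξ k i) (ξlim i)) :
    ∃ ξbar : H, Filter.Tendsto ξlim Filter.atTop (nhds ξbar) ∧ WeakConv y ξbar := by
  have hstep (i : ℕ) : dist (ξlim i) (ξlim (i + 1)) ≤ ‖e i‖ := by
    rw [dist_comm, dist_eq_norm]
    exact (hweak (i + 1)).norm_sub_le ((hweak i).comp_add 1)
      (norm_xi_sub_xi_succ_le hG hy hξ0 hξ i)
  obtain ⟨ξbar, hξbar⟩ := cauchySeq_tendsto_of_complete (cauchySeq_of_dist_le_of_summable _ hstep he)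
  refine ⟨ξbar, hξbar, weakConv_of_norm_shift_le hweak hξbar (tendsto_sum_nat_add (‖e ·‖))
    fun i k => ?_⟩
  exact (norm_y_sub_xi_le_sum hG hy hξ0 hξ i k).trans
    (((summable_nat_add_iff i).2 he).sum_le_tsum _ fun j _ => norm_nonneg _)
end

section
/- Let (G_k) be nonexpansive operators on H, (e_k) ⊂ H with ∑‖e_k‖ < ∞. Define y_{k+1} = G_k y_k + e_k and ξ_0(i) = y_i, ξ_{k+1}(i) = G_{k+i} ξ_k(i). Suppose for every i, (ξ_k(i))_k converges strongly to some ξ(i) ∈ H. Then (y_k) converges strongly to lim_i ξ(i). -/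
variable {H : Type*} [NormedAddCommGroup H] [InnerProductSpace ℝ H] [CompleteSpace H]

/-!
Put `T i := ∑_{j ≥ i} ‖e j‖`. Since every `G k` is nonexpansive, running the exact scheme
and the perturbed one from the same point `y i` keeps them within the accumulated error:
`‖y (k + i) - ξ k i‖ ≤ T i`. For the same reason the exact runs started at `y (i + 1)` and at
`G i (y i)` stay within `‖e i‖` of each other, so `‖ξlim (i + 1) - ξlim i‖ ≤ ‖e i‖`,
hence `ξlim` is Cauchy with some limit `ξbar`. Finally
`‖y n - ξbar‖ ≤ T i + ‖ξ (n - i) i - ξlim i‖ + ‖ξlim i - ξbar‖`, and all three terms become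
small by taking first `i`, then `n`, large.
-/

open Filter Topology Finset

theorem tendsto_of_eventually_dist_le_of_tendsto {ι α X : Type*} [PseudoMetricSpace X]
    {p : Filter ι} [p.NeBot] {l : Filter α} {F : ι → α → X} {f : α → X} {z : ι → X} {a : X}
    {r : ι → ℝ} (hF : ∀ i, Tendsto (F i) l (𝓝 (z i))) (hz : Tendsto z p (𝓝 a))
    (hr : Tendsto r p (𝓝 0)) (hfF : ∀ i, ∀ᶠ x in l, dist (f x) (F i x) ≤ r i) :
    Tendsto f l (𝓝 a) := by
  refine Metric.tendsto_nhds.2 fun ε hε => ?_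
  obtain ⟨i, hzi, hri⟩ := ((Metric.tendsto_nhds.1 hz (ε / 3) (by positivity)).and
    (hr.eventually (gt_mem_nhds (by positivity : (0 : ℝ) < ε / 3)))).exists
  filter_upwards [hfF i, Metric.tendsto_nhds.1 (hF i) (ε / 3) (by positivity)] with x hfx hFx
  calc dist (f x) a ≤ dist (f x) (F i x) + dist (F i x) (z i) + dist (z i) a :=
        dist_triangle4 _ _ _ _
    _ < ε := by linarith

section InexactOrbit

variable {X : Type*} [PseudoMetricSpace X] {G : ℕ → X → X} {y : ℕ → X} {d : ℕ → ℝ}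
  {ξ : ℕ → ℕ → X}

theorem dist_restartedOrbit_succ_le (hG : ∀ k, LipschitzWith 1 (G k))
    (hy : ∀ k, dist (y (k + 1)) (G k (y k)) ≤ d k) (hξ0 : ∀ i, ξ 0 i = y i)
    (hξ : ∀ k i, ξ (k + 1) i = G (k + i) (ξ k i)) (k i : ℕ) :
    dist (ξ (k + 1) i) (ξ k (i + 1)) ≤ d i := by
  induction k with
  | zero => simpa [hξ, hξ0, dist_comm] using hy i
  | succ k ih =>
    rw [hξ (k + 1), hξ k (i + 1), show k + (i + 1) = k + 1 + i by omega]
    simpa using (hG _).dist_le_mul_of_le ih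

theorem dist_inexactOrbit_restartedOrbit_le (hG : ∀ k, LipschitzWith 1 (G k))
    (hy : ∀ k, dist (y (k + 1)) (G k (y k)) ≤ d k) (hξ0 : ∀ i, ξ 0 i = y i)
    (hξ : ∀ k i, ξ (k + 1) i = G (k + i) (ξ k i)) (k i : ℕ) :
    dist (y (k + i)) (ξ k i) ≤ ∑ j ∈ range k, d (j + i) := by
  induction k with
  | zero => simp [hξ0]
  | succ k ih =>
    rw [sum_range_succ, hξ, show k + 1 + i = k + i + 1 by omega]
    calc dist (y (k + i + 1)) (G (k + i) (ξ k i))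
        ≤ dist (y (k + i + 1)) (G (k + i) (y (k + i)))
          + dist (G (k + i) (y (k + i))) (G (k + i) (ξ k i)) := dist_triangle _ _ _
      _ ≤ d (k + i) + ∑ j ∈ range k, d (j + i) := by
        gcongr
        · exact hy _
        · simpa using (hG _).dist_le_mul_of_le ih
      _ = _ := add_comm _ _

theorem dist_inexactOrbit_restartedOrbit_le_tsum (hG : ∀ k, LipschitzWith 1 (G k))
    (hy : ∀ k, dist (y (k + 1)) (G k (y k)) ≤ d k) (hd : Summable d)
    (hξ0 : ∀ i, ξ 0 i = y i) (hξ : ∀ k i, ξ (k + 1) i = G (k + i) (ξ k i)) {i n : ℕ}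
    (hin : i ≤ n) :
    dist (y n) (ξ (n - i) i) ≤ ∑' j, d (j + i) := by
  have hd_nonneg : ∀ k, 0 ≤ d k := fun k => dist_nonneg.trans (hy k)
  calc dist (y n) (ξ (n - i) i) = dist (y (n - i + i)) (ξ (n - i) i) := by
        rw [Nat.sub_add_cancel hin]
    _ ≤ ∑ j ∈ range (n - i), d (j + i) :=
      dist_inexactOrbit_restartedOrbit_le hG hy hξ0 hξ _ _
    _ ≤ ∑' j, d (j + i) :=
      ((summable_nat_add_iff i).2 hd).sum_le_tsum _ fun j _ => hd_nonneg _

theorem exists_tendsto_restartedOrbit_limit_and_inexactOrbit [CompleteSpace X]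
    (hG : ∀ k, LipschitzWith 1 (G k)) (hy : ∀ k, dist (y (k + 1)) (G k (y k)) ≤ d k)
    (hd : Summable d) (hξ0 : ∀ i, ξ 0 i = y i)
    (hξ : ∀ k i, ξ (k + 1) i = G (k + i) (ξ k i)) {ξlim : ℕ → X}
    (hξlim : ∀ i, Tendsto (fun k => ξ k i) atTop (𝓝 (ξlim i))) :
    ∃ ξbar, Tendsto ξlim atTop (𝓝 ξbar) ∧ Tendsto y atTop (𝓝 ξbar) := by
  have hstep : ∀ i, dist (ξlim i) (ξlim (i + 1)) ≤ d i := fun i =>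
    le_of_tendsto ((hξlim i).comp (tendsto_add_atTop_nat 1) |>.dist (hξlim (i + 1)))
      (Eventually.of_forall fun k => dist_restartedOrbit_succ_le hG hy hξ0 hξ k i)
  obtain ⟨ξbar, hξbar⟩ :=
    cauchySeq_tendsto_of_complete (cauchySeq_of_dist_le_of_summable d hstep hd)
  refine ⟨ξbar, hξbar, tendsto_of_eventually_dist_le_of_tendsto
    (fun i => (hξlim i).comp (tendsto_sub_atTop_nat i)) hξbar (tendsto_sum_nat_add d)
    fun i => ?_⟩
  filter_upwards [eventually_ge_atTop i] with n hin
  exact dist_inexactOrbit_restartedOrbit_le_tsum hG hy hd hξ0 hξ hin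

end InexactOrbit

theorem stmt13 (G : ℕ → H → H) (hG : ∀ k, Nonexpansive (G k))
    (e : ℕ → H) (he : Summable fun k => ‖e k‖)
    (y : ℕ → H) (hy : ∀ k, y (k + 1) = G k (y k) + e k)
    (ξ : ℕ → ℕ → H) (hξ0 : ∀ i, ξ 0 i = y i)
    (hξ : ∀ k i, ξ (k + 1) i = G (k + i) (ξ k i))
    (ξlim : ℕ → H)
    (hstrong : ∀ i, Filter.Tendsto (fun k => ξ k i) Filter.atTop (nhds (ξlim i))) :
    ∃ ξbar : H, Filter.Tendsto ξlim Filter.atTop (nhds ξbar) ∧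
      Filter.Tendsto y Filter.atTop (nhds ξbar) := by
  have hG' : ∀ k, LipschitzWith 1 (G k) := fun k =>
    LipschitzWith.mk_one fun x x' => by simpa only [dist_eq_norm] using hG k x x'
  have hy' : ∀ k, dist (y (k + 1)) (G k (y k)) ≤ ‖e k‖ := fun k => by
    rw [hy, dist_eq_norm, add_sub_cancel_left]
  exact exists_tendsto_restartedOrbit_limit_and_inexactOrbit hG' hy' he hξ0 hξ hstrong
end

section
/- Let α ∈ (0,1], T: H → H α-averaged with Fix T ≠ ∅, (λ_k) ⊂ (0, 1/α] with ∑ λ_k(1 − αλ_k) = ∞, (e_k) ⊂ H and (η_k) ⊂ ℝ₊ with ∑ η_k‖e_k‖ < ∞. Define x_{k+1} = x_k + λ_k(Tx_k − x_k) + η_k e_k from x_0 ∈ H. Then (x_k) converges weakly to a point in Fix T. -/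
variable {H : Type*} [NormedAddCommGroup H] [InnerProductSpace ℝ H] [CompleteSpace H]

/-
Substituting `T = (1 - α) Id + α R`, the iteration is the inexact Krasnosel'skiĭ–Mann iteration
`x_{k+1} = x_k + μ_k (R x_k - x_k) + f_k` for the nonexpansive map `R`, with `μ_k = α λ_k ∈ [0, 1]`,
`Fix R = Fix T`, `∑ μ_k (1 - μ_k) = ∞` and `∑ ‖f_k‖ < ∞`. Distances to fixed points of `R` are
quasi-Fejér, hence convergent, and the energy estimate
`‖x_{k+1} - q‖² ≤ ‖x_k - q‖² - μ_k (1 - μ_k) ‖R x_k - x_k‖² + O(‖f_k‖)` makes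
`∑ μ_k (1 - μ_k) ‖R x_k - x_k‖²` finite. The residual `‖R x_k - x_k‖` is itself quasi-decreasing,
so it converges, and its limit must be `0` since `∑ μ_k (1 - μ_k)` diverges. Demiclosedness of
`Id - R` then puts every weak cluster point in `Fix R`, and Opial's argument gives weak convergence.
Weak cluster points are taken along ultrafilters, along which a bounded sequence has a weak limit
by the Riesz representation theorem.
-/

open Filter Topology Finset

section RealSequences

theorem tendsto_of_le_add_of_summable {a ε : ℕ → ℝ} {m : ℝ} (hm : ∀ k, m ≤ a k)
    (hε : ∀ k, 0 ≤ ε k) (hsum : Summable ε) (hrec : ∀ k, a (k + 1) ≤ a k + ε k) :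
    ∃ l, Tendsto a atTop (𝓝 l) := by
  set b : ℕ → ℝ := fun k => a k - ∑ i ∈ range k, ε i with hb
  have hanti : Antitone b := antitone_nat_of_succ_le fun k => by
    simp only [hb, sum_range_succ]
    linarith [hrec k]
  have hbdd : BddBelow (Set.range b) := ⟨m - ∑' i, ε i, by
    rintro _ ⟨k, rfl⟩
    linarith [hm k, hsum.sum_le_tsum (range k) (fun i _ => hε i)]⟩
  refine ⟨(⨅ k, b k) + ∑' i, ε i, ?_⟩
  simpa [hb] using (tendsto_atTop_ciInf hanti hbdd).add hsum.hasSum.tendsto_sum_nat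

theorem summable_of_le_sub_add {a c ε : ℕ → ℝ} (ha : ∀ k, 0 ≤ a k) (hc : ∀ k, 0 ≤ c k)
    (hε : ∀ k, 0 ≤ ε k) (hsum : Summable ε) (hrec : ∀ k, a (k + 1) ≤ a k - c k + ε k) :
    Summable c := by
  refine summable_of_sum_range_le hc (c := a 0 + ∑' i, ε i) fun n => ?_
  have htel : ∑ i ∈ range n, c i ≤ a 0 - a n + ∑ i ∈ range n, ε i := by
    induction n with
    | zero => simp
    | succ n ih =>
      rw [sum_range_succ, sum_range_succ]
      linarith [hrec n]
  linarith [ha n, hsum.sum_le_tsum (range n) (fun i _ => hε i)]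

theorem summable_of_summable_mul_of_tendsto {c a : ℕ → ℝ} {l : ℝ} (hc : ∀ k, 0 ≤ c k)
    (ha : Tendsto a atTop (𝓝 l)) (hl : 0 < l) (hca : Summable fun k => c k * a k) :
    Summable c := by
  refine (hca.mul_left (2 / l)).of_norm_bounded_eventually_nat ?_
  filter_upwards [ha.eventually (eventually_ge_nhds (half_lt_self hl))] with k hk
  rw [Real.norm_of_nonneg (hc k), div_mul_eq_mul_div, le_div_iff₀ hl]
  nlinarith [hc k]

end RealSequences

section InnerProductSpace

variable {E : Type*} [NormedAddCommGroup E] [InnerProductSpace ℝ E]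

def WeakTendsto {ι : Type*} (x : ι → E) (l : Filter ι) (p : E) : Prop :=
  ∀ u : E, Tendsto (fun k => inner ℝ (x k) u) l (𝓝 (inner ℝ p u))

theorem norm_sub_smul_add_smul_sq (μ : ℝ) (a b : E) :
    ‖(1 - μ) • a + μ • b‖ ^ 2
      = (1 - μ) * ‖a‖ ^ 2 + μ * ‖b‖ ^ 2 - μ * (1 - μ) * ‖a - b‖ ^ 2 := by
  simp only [← real_inner_self_eq_norm_sq, inner_add_left, inner_add_right, inner_sub_left,
    inner_sub_right, real_inner_smul_left, real_inner_smul_right, real_inner_comm b a]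
  ring

theorem apply_eq_self_iff_of_eq_sub_smul_add_smul {T R : E → E} {α : ℝ} (hα : α ≠ 0)
    (hTR : ∀ x, T x = (1 - α) • x + α • R x) (q : E) : T q = q ↔ R q = q := by
  have hsub : T q - q = α • (R q - q) := by
    rw [hTR]
    module
  rw [← sub_eq_zero, hsub, smul_eq_zero_iff_right hα, sub_eq_zero]

/-- `‖x_k - p‖² - ‖x_k - q‖²` is affine in `⟪x_k, p - q⟫`, which therefore converges along `L`;
its limits along `l₁` and `l₂` are `⟪p, p - q⟫` and `⟪q, p - q⟫`. -/
theorem eq_of_weakTendsto_of_tendsto_norm_sub {ι : Type*} {L l₁ l₂ : Filter ι} [l₁.NeBot]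
    [l₂.NeBot] (h₁ : l₁ ≤ L) (h₂ : l₂ ≤ L) {x : ι → E} {p q : E} (hp : WeakTendsto x l₁ p)
    (hq : WeakTendsto x l₂ q) {a b : ℝ} (ha : Tendsto (fun k => ‖x k - p‖) L (𝓝 a))
    (hb : Tendsto (fun k => ‖x k - q‖) L (𝓝 b)) : p = q := by
  have hrepr : ∀ k, inner ℝ (x k) (p - q)
      = (‖p‖ ^ 2 - ‖q‖ ^ 2 - (‖x k - p‖ ^ 2 - ‖x k - q‖ ^ 2)) / 2 := fun k => by
    rw [norm_sub_sq_real, norm_sub_sq_real, inner_sub_right]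
    ring
  have hlim : Tendsto (fun k => inner ℝ (x k) (p - q)) L
      (𝓝 ((‖p‖ ^ 2 - ‖q‖ ^ 2 - (a ^ 2 - b ^ 2)) / 2)) := by
    simp only [hrepr]
    exact ((tendsto_const_nhds.sub ((ha.pow 2).sub (hb.pow 2))).div_const 2)
  have hpq : inner ℝ p (p - q) = inner ℝ q (p - q) :=
    (tendsto_nhds_unique (hp (p - q)) (hlim.mono_left h₁)).trans
      (tendsto_nhds_unique (hlim.mono_left h₂) (hq (p - q)))
  rw [← sub_eq_zero, ← inner_self_eq_zero (𝕜 := ℝ), inner_sub_left, hpq, sub_self]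

namespace Nonexpansive

variable {R : E → E}

/-- Demiclosedness of `Id - R` at `0`: expanding `‖x_k - R q‖ ≤ ‖x_k - q‖ + ‖R x_k - x_k‖` with
`x_k - R q = (x_k - q) + (q - R q)` gives
`‖q - R q‖² ≤ 2 ⟪q - x_k, q - R q⟫ + ‖R x_k - x_k‖ (2 M + ‖R x_k - x_k‖)`. -/
theorem apply_eq_of_weakTendsto (hR : Nonexpansive R) {ι : Type*} {l : Filter ι} [l.NeBot]
    {x : ι → E} {q : E} {M : ℝ} (hM : ∀ k, ‖x k - q‖ ≤ M) (hq : WeakTendsto x l q)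
    (hres : Tendsto (fun k => ‖R (x k) - x k‖) l (𝓝 0)) : R q = q := by
  set c := q - R q with hc
  have hbound : ∀ k, ‖c‖ ^ 2 ≤ 2 * (inner ℝ q c - inner ℝ (x k) c)
      + ‖R (x k) - x k‖ * (2 * M + ‖R (x k) - x k‖) := fun k => by
    have htri : ‖x k - R q‖ ≤ ‖R (x k) - x k‖ + ‖x k - q‖ := by
      calc ‖x k - R q‖ = ‖-(R (x k) - x k) + (R (x k) - R q)‖ := by congr 1; module
        _ ≤ ‖R (x k) - x k‖ + ‖x k - q‖ := by
          grw [norm_add_le, norm_neg, hR (x k) q]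
    have hexp : ‖x k - R q‖ ^ 2 = ‖x k - q‖ ^ 2 + 2 * inner ℝ (x k - q) c + ‖c‖ ^ 2 := by
      rw [show x k - R q = (x k - q) + c by rw [hc]; abel, norm_add_sq_real]
    have hsq := pow_le_pow_left₀ (norm_nonneg _) htri 2
    rw [inner_sub_left] at hexp
    nlinarith [norm_nonneg (R (x k) - x k), hM k]
  have hrhs : Tendsto (fun k => 2 * (inner ℝ q c - inner ℝ (x k) c)
      + ‖R (x k) - x k‖ * (2 * M + ‖R (x k) - x k‖)) l (𝓝 0) := by
    simpa using (((tendsto_const_nhds (x := inner ℝ q c)).sub (hq c)).const_mul 2).add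
      (hres.mul ((tendsto_const_nhds (x := 2 * M)).add hres))
  have hc0 : ‖c‖ ^ 2 ≤ 0 := ge_of_tendsto' hrhs hbound
  have hc' : c = 0 := by simpa using hc0
  exact (sub_eq_zero.1 hc').symm

variable {μ : ℝ}

theorem norm_sq_step_sub_le (hR : Nonexpansive R) {q : E} (hq : R q = q) (hμ0 : 0 ≤ μ)
    (y : E) :
    ‖y + μ • (R y - y) - q‖ ^ 2 ≤ ‖y - q‖ ^ 2 - μ * (1 - μ) * ‖R y - y‖ ^ 2 := by
  have hcomb : y + μ • (R y - y) - q = (1 - μ) • (y - q) + μ • (R y - q) := by module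
  have hdiff : ‖(y - q) - (R y - q)‖ = ‖R y - y‖ := by rw [← norm_neg]; congr 1; module
  rw [hcomb, norm_sub_smul_add_smul_sq, hdiff]
  have := pow_le_pow_left₀ (norm_nonneg _) (by simpa only [hq] using hR y q) 2
  nlinarith

theorem norm_step_sub_le (hR : Nonexpansive R) {q : E} (hq : R q = q) (hμ0 : 0 ≤ μ)
    (hμ1 : μ ≤ 1) (y : E) : ‖y + μ • (R y - y) - q‖ ≤ ‖y - q‖ := by
  refine pow_le_pow_iff_left₀ (norm_nonneg _) (norm_nonneg _) two_ne_zero |>.1 ?_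
  have := hR.norm_sq_step_sub_le hq hμ0 y
  nlinarith [mul_nonneg hμ0 (sub_nonneg.2 hμ1)]

theorem norm_step_add_sub_le (hR : Nonexpansive R) {q : E} (hq : R q = q) (hμ0 : 0 ≤ μ)
    (hμ1 : μ ≤ 1) (y f : E) : ‖y + μ • (R y - y) + f - q‖ ≤ ‖y - q‖ + ‖f‖ := by
  calc ‖y + μ • (R y - y) + f - q‖ = ‖(y + μ • (R y - y) - q) + f‖ := by congr 1; module
    _ ≤ ‖y - q‖ + ‖f‖ := by grw [norm_add_le, hR.norm_step_sub_le hq hμ0 hμ1 y]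

theorem norm_sq_step_add_sub_le (hR : Nonexpansive R) {q : E} (hq : R q = q) (hμ0 : 0 ≤ μ)
    (hμ1 : μ ≤ 1) (y f : E) :
    ‖y + μ • (R y - y) + f - q‖ ^ 2
      ≤ ‖y - q‖ ^ 2 - μ * (1 - μ) * ‖R y - y‖ ^ 2 + ‖f‖ * (2 * ‖y - q‖ + ‖f‖) := by
  have htri : ‖y + μ • (R y - y) + f - q‖ ≤ ‖y + μ • (R y - y) - q‖ + ‖f‖ := by
    calc ‖y + μ • (R y - y) + f - q‖ = ‖(y + μ • (R y - y) - q) + f‖ := by congr 1; module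
      _ ≤ _ := norm_add_le _ _
  have hsq := pow_le_pow_left₀ (norm_nonneg _) htri 2
  have hz := hR.norm_step_sub_le hq hμ0 hμ1 y
  nlinarith [hR.norm_sq_step_sub_le hq hμ0 y, norm_nonneg f]

theorem norm_apply_step_add_sub_le (hR : Nonexpansive R) (hμ0 : 0 ≤ μ) (hμ1 : μ ≤ 1)
    (y f : E) :
    ‖R (y + μ • (R y - y) + f) - (y + μ • (R y - y) + f)‖ ≤ ‖R y - y‖ + 2 * ‖f‖ := by
  set z := y + μ • (R y - y) + f
  have hmove : ‖z - y‖ ≤ μ * ‖R y - y‖ + ‖f‖ := by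
    calc ‖z - y‖ = ‖μ • (R y - y) + f‖ := by congr 1; module
      _ ≤ μ * ‖R y - y‖ + ‖f‖ := by
        grw [norm_add_le, norm_smul, Real.norm_of_nonneg hμ0]
  have hgap : ‖R y - z‖ ≤ (1 - μ) * ‖R y - y‖ + ‖f‖ := by
    calc ‖R y - z‖ = ‖(1 - μ) • (R y - y) - f‖ := by congr 1; module
      _ ≤ (1 - μ) * ‖R y - y‖ + ‖f‖ := by
        grw [norm_sub_le, norm_smul, Real.norm_of_nonneg (sub_nonneg.2 hμ1)]
  calc ‖R z - z‖ = ‖(R z - R y) + (R y - z)‖ := by congr 1; module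
    _ ≤ ‖z - y‖ + ‖R y - z‖ := by grw [norm_add_le, hR z y]
    _ ≤ ‖R y - y‖ + 2 * ‖f‖ := by linarith

end Nonexpansive

section KrasnoselskiiMann

variable {R : E → E} {μ : ℕ → ℝ} {f x : ℕ → E}

theorem Nonexpansive.exists_tendsto_norm_sub_of_km (hR : Nonexpansive R) (hμ0 : ∀ k, 0 ≤ μ k)
    (hμ1 : ∀ k, μ k ≤ 1) (hf : Summable fun k => ‖f k‖)
    (hx : ∀ k, x (k + 1) = x k + μ k • (R (x k) - x k) + f k) {q : E} (hq : R q = q) :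
    ∃ a, Tendsto (fun k => ‖x k - q‖) atTop (𝓝 a) :=
  tendsto_of_le_add_of_summable (fun k => norm_nonneg _) (fun k => norm_nonneg _) hf fun k => by
    rw [hx k]
    exact hR.norm_step_add_sub_le hq (hμ0 k) (hμ1 k) _ _

theorem Nonexpansive.summable_mul_norm_apply_sub_sq_of_km (hR : Nonexpansive R)
    (hFix : ∃ q, R q = q) (hμ0 : ∀ k, 0 ≤ μ k) (hμ1 : ∀ k, μ k ≤ 1)
    (hf : Summable fun k => ‖f k‖) (hx : ∀ k, x (k + 1) = x k + μ k • (R (x k) - x k) + f k) :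
    Summable fun k => μ k * (1 - μ k) * ‖R (x k) - x k‖ ^ 2 := by
  obtain ⟨q, hq⟩ := hFix
  obtain ⟨a, ha⟩ := hR.exists_tendsto_norm_sub_of_km hμ0 hμ1 hf hx hq
  obtain ⟨B, hB⟩ := ha.bddAbove_range
  obtain ⟨C, hC⟩ := hf.tendsto_atTop_zero.bddAbove_range
  have hBk (k : ℕ) : ‖x k - q‖ ≤ B := hB ⟨k, rfl⟩
  have hCk (k : ℕ) : ‖f k‖ ≤ C := hC ⟨k, rfl⟩
  have hBC : 0 ≤ 2 * B + C := by
    linarith [(norm_nonneg _).trans (hBk 0), (norm_nonneg _).trans (hCk 0)]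
  refine summable_of_le_sub_add (a := fun k => ‖x k - q‖ ^ 2) (fun k => sq_nonneg _)
    (fun k => mul_nonneg (mul_nonneg (hμ0 k) (sub_nonneg.2 (hμ1 k))) (sq_nonneg _))
    (fun k => mul_nonneg (norm_nonneg _) hBC) (hf.mul_right (2 * B + C)) fun k => ?_
  rw [hx k]
  refine (hR.norm_sq_step_add_sub_le hq (hμ0 k) (hμ1 k) _ _).trans ?_
  gcongr
  exacts [hBk k, hCk k]

theorem Nonexpansive.tendsto_norm_apply_sub_of_km (hR : Nonexpansive R) (hFix : ∃ q, R q = q)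
    (hμ0 : ∀ k, 0 ≤ μ k) (hμ1 : ∀ k, μ k ≤ 1) (hdiv : ¬ Summable fun k => μ k * (1 - μ k))
    (hf : Summable fun k => ‖f k‖) (hx : ∀ k, x (k + 1) = x k + μ k • (R (x k) - x k) + f k) :
    Tendsto (fun k => ‖R (x k) - x k‖) atTop (𝓝 0) := by
  obtain ⟨l, hl⟩ := tendsto_of_le_add_of_summable (a := fun k => ‖R (x k) - x k‖)
    (fun k => norm_nonneg _) (fun k => by positivity) (hf.mul_left 2) fun k => by
      rw [hx k]
      exact hR.norm_apply_step_add_sub_le (hμ0 k) (hμ1 k) _ _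
  obtain rfl : 0 = l := (ge_of_tendsto' hl fun k => norm_nonneg _).eq_or_lt.resolve_right
    fun hpos => hdiv <| summable_of_summable_mul_of_tendsto
      (fun k => mul_nonneg (hμ0 k) (sub_nonneg.2 (hμ1 k))) (hl.pow 2) (by positivity)
      (hR.summable_mul_norm_apply_sub_sq_of_km hFix hμ0 hμ1 hf hx)
  exact hl

end KrasnoselskiiMann

end InnerProductSpace

section Hilbert

theorem exists_weakTendsto_ultrafilter {ι : Type*} (U : Ultrafilter ι) {x : ι → H} {M : ℝ}
    (hx : ∀ k, ‖x k‖ ≤ M) : ∃ p, WeakTendsto x U p := by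
  have hlim : ∀ u : H, ∃ c, |c| ≤ M * ‖u‖ ∧ Tendsto (fun k => inner ℝ (x k) u) U (𝓝 c) := by
    intro u
    have hmem :
        (U.map fun k => inner ℝ (x k) u : Filter ℝ) ≤ 𝓟 (Set.Icc (-(M * ‖u‖)) (M * ‖u‖)) :=
      le_principal_iff.2 <| mem_map.2 <| univ_mem' fun k => abs_le.1 <|
        (abs_real_inner_le_norm _ _).trans (mul_le_mul_of_nonneg_right (hx k) (norm_nonneg u))
    obtain ⟨c, hc, hcU⟩ := isCompact_Icc.ultrafilter_le_nhds _ hmem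
    exact ⟨c, abs_le.2 hc, hcU⟩
  choose L hLM hL using hlim
  let φ : H →ₗ[ℝ] ℝ :=
    { toFun := L
      map_add' := fun u v => tendsto_nhds_unique (hL (u + v))
        (by simpa [inner_add_right] using (hL u).add (hL v))
      map_smul' := fun c u => tendsto_nhds_unique (hL (c • u))
        (by simpa [inner_smul_right] using (hL u).const_mul c) }
  refine ⟨(InnerProductSpace.toDual ℝ H).symm (φ.mkContinuous M fun u => hLM u), fun u => ?_⟩
  rw [InnerProductSpace.toDual_symm_apply]
  exact hL u

theorem exists_weakTendsto_of_opial {x : ℕ → H} {M : ℝ} (hx : ∀ k, ‖x k‖ ≤ M) {F : Set H}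
    (hdist : ∀ q ∈ F, ∃ a, Tendsto (fun k => ‖x k - q‖) atTop (𝓝 a))
    (hcluster : ∀ (U : Ultrafilter ℕ) q, (U : Filter ℕ) ≤ atTop → WeakTendsto x U q → q ∈ F) :
    ∃ p ∈ F, WeakTendsto x atTop p := by
  obtain ⟨p, hp⟩ := exists_weakTendsto_ultrafilter (Ultrafilter.of atTop) hx
  have hpF : p ∈ F := hcluster _ p (Ultrafilter.of_le _) hp
  refine ⟨p, hpF, fun u => tendsto_iff_ultrafilter _ _ _ |>.2 fun V hV => ?_⟩
  obtain ⟨q, hq⟩ := exists_weakTendsto_ultrafilter V hx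
  obtain ⟨a, ha⟩ := hdist p hpF
  obtain ⟨b, hb⟩ := hdist q (hcluster V q hV hq)
  rw [eq_of_weakTendsto_of_tendsto_norm_sub (Ultrafilter.of_le _) hV hp hq ha hb]
  exact hq u

theorem Nonexpansive.exists_weakTendsto_of_km {R : H → H} (hR : Nonexpansive R)
    (hFix : ∃ q, R q = q) {μ : ℕ → ℝ} (hμ0 : ∀ k, 0 ≤ μ k) (hμ1 : ∀ k, μ k ≤ 1)
    (hdiv : ¬ Summable fun k => μ k * (1 - μ k)) {f : ℕ → H} (hf : Summable fun k => ‖f k‖)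
    {x : ℕ → H} (hx : ∀ k, x (k + 1) = x k + μ k • (R (x k) - x k) + f k) :
    ∃ p, R p = p ∧ WeakTendsto x atTop p := by
  have hdist (q : H) (hq : R q = q) := hR.exists_tendsto_norm_sub_of_km hμ0 hμ1 hf hx hq
  have hres := hR.tendsto_norm_apply_sub_of_km hFix hμ0 hμ1 hdiv hf hx
  obtain ⟨q₀, hq₀⟩ := hFix
  obtain ⟨a, ha⟩ := hdist q₀ hq₀
  obtain ⟨B, hB⟩ := ha.bddAbove_range
  have hM (k : ℕ) : ‖x k‖ ≤ ‖q₀‖ + B :=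
    (norm_le_norm_add_norm_sub' _ _).trans (add_le_add_right (hB ⟨k, rfl⟩) _)
  refine exists_weakTendsto_of_opial hM (F := {q | R q = q}) hdist fun U q hU hq => ?_
  refine hR.apply_eq_of_weakTendsto (M := ‖q₀‖ + B + ‖q‖) (fun k => ?_) hq (hres.mono_left hU)
  grw [norm_sub_le, hM k]

end Hilbert

theorem stmt16_general (α : ℝ) (hα0 : 0 < α) (T : H → H) (hT : Averaged α T)
    (hFix : ∃ x : H, T x = x)
    (lam : ℕ → ℝ) (hlam0 : ∀ k, 0 < lam k) (hlam1 : ∀ k, lam k ≤ 1 / α)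
    (hdiv : ¬ Summable fun k => lam k * (1 - α * lam k))
    (e : ℕ → H) (η : ℕ → ℝ) (hη : ∀ k, 0 ≤ η k)
    (hsum : Summable fun k => η k * ‖e k‖)
    (x : ℕ → H) (hx : ∀ k, x (k + 1) = x k + lam k • (T (x k) - x k) + (η k) • e k) :
    ∃ p : H, T p = p ∧ WeakConv x p := by
  obtain ⟨R, hR, hTR⟩ := hT
  have hfixed := apply_eq_self_iff_of_eq_sub_smul_add_smul hα0.ne' hTR
  have hμ0 (k : ℕ) : 0 ≤ α * lam k := (mul_pos hα0 (hlam0 k)).le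
  have hμ1 (k : ℕ) : α * lam k ≤ 1 := by
    simpa [hα0.ne'] using mul_le_mul_of_nonneg_left (hlam1 k) hα0.le
  have hdivμ : ¬ Summable fun k => α * lam k * (1 - α * lam k) := fun h =>
    hdiv <| (h.mul_left α⁻¹).congr fun k => by field_simp
  have hf : Summable fun k => ‖η k • e k‖ := by
    simpa [norm_smul, abs_of_nonneg (hη _)] using hsum
  have hxR (k : ℕ) : x (k + 1) = x k + (α * lam k) • (R (x k) - x k) + η k • e k := by
    rw [hx k, hTR]
    module
  obtain ⟨p, hp, hlim⟩ := hR.exists_weakTendsto_of_km (hFix.imp fun q => (hfixed q).1) hμ0 hμ1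
    hdivμ hf hxR
  exact ⟨p, (hfixed p).2 hp, hlim⟩

theorem stmt16 (α : ℝ) (hα0 : 0 < α) (hα1 : α ≤ 1) (T : H → H) (hT : Averaged α T)
    (hFix : ∃ x : H, T x = x)
    (lam : ℕ → ℝ) (hlam0 : ∀ k, 0 < lam k) (hlam1 : ∀ k, lam k ≤ 1 / α)
    (hdiv : ¬ Summable fun k => lam k * (1 - α * lam k))
    (e : ℕ → H) (η : ℕ → ℝ) (hη : ∀ k, 0 ≤ η k)
    (hsum : Summable fun k => η k * ‖e k‖)
    (x : ℕ → H) (hx : ∀ k, x (k + 1) = x k + lam k • (T (x k) - x k) + (η k) • e k) :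
    ∃ p : H, T p = p ∧ WeakConv x p :=
  stmt16_general α hα0 T hT hFix lam hlam0 hlam1 hdiv e η hη hsum x hx
end

section
/- Let A: H → 2^H be maximally monotone with zer A ≠ ∅. Consider the exact generalized proximal point iteration x_{k+1} = (1−λ_k)x_k + λ_k J_{c_k A} x_k with λ_k ∈ (0,2), c := inf_k c_k > 0. Suppose A is metrically subregular at x̄ ∈ zer A for 0 with constant κ on B[x̄;δ], and x_0 ∈ B[x̄;δ]. Set γ_k = 1 + κ/c_k and ρ_k = (1 − λ_k(2−λ_k)/γ_k²)^{1/2}. Then every x_k ∈ B[x̄;δ] and d(x_{k+1}, zer A) ≤ ρ_k d(x_k, zer A). -/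
/-!
Since `J_{cA}` is firmly nonexpansive with fixed points `zer A`, each relaxed step satisfies
`‖x⁺ - z‖² ≤ ‖x - z‖² - λ(2-λ)‖x - J x‖²` for every `z ∈ zer A`. This keeps the iterates in
`B[x̄;δ]` and gives `d(x⁺, zer A)² ≤ d(x, zer A)² - λ(2-λ)‖x - J x‖²`. Metric subregularity at
`J x`, which lies in `B[x̄;δ]` with `x` and satisfies `(x - J x)/c ∈ A (J x)`, gives
`d(x, zer A) ≤ ‖x - J x‖ + d(J x, zer A) ≤ γ ‖x - J x‖`, and the two bounds
combine to `d(x⁺, zer A)² ≤ ρ² d(x, zer A)²`.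
-/

variable {H : Type*} [NormedAddCommGroup H] [InnerProductSpace ℝ H] [CompleteSpace H]

open Metric

theorem infDist_sq_add_le {α : Type*} [PseudoMetricSpace α] {Z : Set α} (hZ : Z.Nonempty)
    {x x' : α} {s : ℝ} (h : ∀ z ∈ Z, dist x' z ^ 2 + s ≤ dist x z ^ 2) :
    infDist x' Z ^ 2 + s ≤ infDist x Z ^ 2 := by
  rcases le_or_gt (infDist x' Z ^ 2 + s) 0 with hneg | hpos
  · exact hneg.trans (sq_nonneg _)
  have hsqrt : √(infDist x' Z ^ 2 + s) ≤ infDist x Z := by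
    refine (le_infDist hZ).2 fun z hz => ?_
    rw [Real.sqrt_le_left dist_nonneg]
    nlinarith [infDist_nonneg (x := x') (s := Z), infDist_le_dist_of_mem (x := x') hz, h z hz]
  simpa [Real.sq_sqrt hpos.le] using pow_le_pow_left₀ (Real.sqrt_nonneg _) hsqrt 2

theorem le_sqrt_mul_of_sq_le {a b r : ℝ} (ha : 0 ≤ a) (hb : 0 ≤ b) (h : a ^ 2 ≤ r * b ^ 2) :
    a ≤ √r * b := by
  rw [← Real.sqrt_sq ha, ← Real.sqrt_sq hb, ← Real.sqrt_mul' _ (sq_nonneg b)]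
  exact Real.sqrt_le_sqrt h

section

variable {E : Type*} [NormedAddCommGroup E] [InnerProductSpace ℝ E]

theorem norm_lineMap_sub_sq_le {x y z : E} (hxyz : 0 ≤ inner ℝ (y - z) (x - y)) {lam : ℝ}
    (hlam : 0 ≤ lam) :
    ‖(1 - lam) • x + lam • y - z‖ ^ 2 ≤ ‖x - z‖ ^ 2 - lam * (2 - lam) * ‖x - y‖ ^ 2 := by
  have hdecomp : (1 - lam) • x + lam • y - z = (x - z) - lam • (x - y) := by module
  have hinner : ‖x - y‖ ^ 2 ≤ inner ℝ (x - z) (x - y) := by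
    have hsplit : x - z = (y - z) + (x - y) := by abel
    rw [hsplit, inner_add_left, real_inner_self_eq_norm_sq]
    linarith
  rw [hdecomp, norm_sub_sq_real, inner_smul_right, norm_smul, mul_pow, Real.norm_eq_abs, sq_abs]
  nlinarith

theorem norm_lineMap_sub_le {x y z : E} (hxyz : 0 ≤ inner ℝ (y - z) (x - y)) {lam : ℝ}
    (hlam₀ : 0 ≤ lam) (hlam₂ : lam ≤ 2) : ‖(1 - lam) • x + lam • y - z‖ ≤ ‖x - z‖ := by
  refine (pow_le_pow_iff_left₀ (norm_nonneg _) (norm_nonneg _) two_ne_zero).1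
    ((norm_lineMap_sub_sq_le hxyz hlam₀).trans ?_)
  have := mul_nonneg (mul_nonneg hlam₀ (sub_nonneg.2 hlam₂)) (sq_nonneg ‖x - y‖)
  linarith

theorem norm_sub_le_of_inner_nonneg {x y z : E} (hxyz : 0 ≤ inner ℝ (y - z) (x - y)) :
    ‖y - z‖ ≤ ‖x - z‖ := by
  simpa using norm_lineMap_sub_le hxyz zero_le_one one_le_two

variable {A : E → Set E} {c : ℝ} {J : E → E}

theorem IsResolvent.inner_nonneg (hA : MonotoneOp A) (hc : 0 < c) (hJ : IsResolvent c A J)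
    {z : E} (hz : (0 : E) ∈ A z) (x : E) : 0 ≤ inner ℝ (J x - z) (x - J x) := by
  have h := hA (J x) (c⁻¹ • (x - J x)) z 0 (hJ x) hz
  rw [sub_zero, inner_smul_right] at h
  exact nonneg_of_mul_nonneg_right (by linarith) (inv_pos.mpr hc)

theorem IsResolvent.infDist_le (hc : 0 < c) (hJ : IsResolvent c A J) {κ : ℝ} (hκ : 0 ≤ κ)
    (x : E) (hsub : infDist (J x) {w | (0 : E) ∈ A w} ≤ κ * infDist 0 (A (J x))) :
    infDist x {w | (0 : E) ∈ A w} ≤ (1 + κ / c) * ‖x - J x‖ := by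
  have hres : infDist 0 (A (J x)) ≤ c⁻¹ * ‖x - J x‖ := by
    have h := infDist_le_dist_of_mem (x := (0 : E)) (hJ x)
    rwa [dist_zero_left, norm_smul, Real.norm_eq_abs, abs_of_pos (inv_pos.mpr hc)] at h
  calc infDist x {w | (0 : E) ∈ A w}
      ≤ infDist (J x) {w | (0 : E) ∈ A w} + ‖x - J x‖ := by
        rw [← dist_eq_norm]; exact infDist_le_infDist_add_dist
    _ ≤ κ * (c⁻¹ * ‖x - J x‖) + ‖x - J x‖ := by
        gcongr; exact hsub.trans (mul_le_mul_of_nonneg_left hres hκ)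
    _ = (1 + κ / c) * ‖x - J x‖ := by ring

theorem IsResolvent.infDist_relaxed_le (hA : MonotoneOp A) (hc : 0 < c)
    (hJ : IsResolvent c A J) {κ : ℝ} (hκ : 0 ≤ κ) {lam : ℝ} (hlam₀ : 0 ≤ lam) (hlam₂ : lam ≤ 2)
    (x : E)
    (hsub : infDist (J x) {w | (0 : E) ∈ A w} ≤ κ * infDist 0 (A (J x)))
    (hzer : {w | (0 : E) ∈ A w}.Nonempty) :
    infDist ((1 - lam) • x + lam • J x) {w | (0 : E) ∈ A w} ≤
      √(1 - lam * (2 - lam) / (1 + κ / c) ^ 2) * infDist x {w | (0 : E) ∈ A w} := by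
  set Z := {w | (0 : E) ∈ A w}
  set γ := 1 + κ / c
  have hγ : 0 < γ := by positivity
  have hdescent : infDist ((1 - lam) • x + lam • J x) Z ^ 2 + lam * (2 - lam) * ‖x - J x‖ ^ 2
      ≤ infDist x Z ^ 2 :=
    infDist_sq_add_le hzer fun z hz => by
      rw [dist_eq_norm, dist_eq_norm]
      linarith [norm_lineMap_sub_sq_le (hJ.inner_nonneg hA hc hz x) hlam₀]
  have hsubreg : infDist x Z ^ 2 ≤ γ ^ 2 * ‖x - J x‖ ^ 2 := by
    rw [← mul_pow]
    exact pow_le_pow_left₀ infDist_nonneg (hJ.infDist_le hc hκ x hsub) 2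
  refine le_sqrt_mul_of_sq_le infDist_nonneg infDist_nonneg ?_
  have hrate : lam * (2 - lam) / γ ^ 2 * infDist x Z ^ 2
      ≤ lam * (2 - lam) * ‖x - J x‖ ^ 2 := by
    rw [div_mul_eq_mul_div, div_le_iff₀ (by positivity)]
    linarith [mul_le_mul_of_nonneg_left hsubreg (mul_nonneg hlam₀ (by linarith : 0 ≤ 2 - lam))]
  linarith

end

theorem stmt18_general (A : H → Set H) (hA : MaxMonotone A)
    (c : ℕ → ℝ) (cinf : ℝ) (hcinf : 0 < cinf) (hc : ∀ k, cinf ≤ c k)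
    (J : ℕ → H → H) (hJ : ∀ k, IsResolvent (c k) A (J k))
    (lam : ℕ → ℝ) (hlam0 : ∀ k, 0 < lam k) (hlam1 : ∀ k, lam k < 2)
    (x : ℕ → H) (hx : ∀ k, x (k + 1) = (1 - lam k) • x k + lam k • J k (x k))
    (xb : H) (hxb : (0 : H) ∈ A xb)
    (κ δ : ℝ) (hκ : 0 < κ)
    (hsub : ∀ z : H, ‖z - xb‖ ≤ δ →
      Metric.infDist z {w : H | (0 : H) ∈ A w} ≤ κ * Metric.infDist (0 : H) (A z))
    (hx0 : ‖x 0 - xb‖ ≤ δ) :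
    ∀ k : ℕ, ‖x k - xb‖ ≤ δ ∧
      Metric.infDist (x (k + 1)) {w : H | (0 : H) ∈ A w} ≤
        Real.sqrt (1 - lam k * (2 - lam k) / (1 + κ / c k) ^ 2) *
          Metric.infDist (x k) {w : H | (0 : H) ∈ A w} := by
  have hck : ∀ k, 0 < c k := fun k => hcinf.trans_le (hc k)
  have hfejer : ∀ k, ‖x (k + 1) - xb‖ ≤ ‖x k - xb‖ := fun k => by
    rw [hx k]
    exact norm_lineMap_sub_le ((hJ k).inner_nonneg hA.1 (hck k) hxb (x k)) (hlam0 k).le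
      (hlam1 k).le
  have hball : ∀ k, ‖x k - xb‖ ≤ δ := fun k => by
    induction k with
    | zero => exact hx0
    | succ k ih => exact (hfejer k).trans ih
  refine fun k => ⟨hball k, ?_⟩
  have hJball : ‖J k (x k) - xb‖ ≤ δ :=
    (norm_sub_le_of_inner_nonneg ((hJ k).inner_nonneg hA.1 (hck k) hxb (x k))).trans (hball k)
  rw [hx k]
  exact (hJ k).infDist_relaxed_le hA.1 (hck k) hκ.le (hlam0 k).le (hlam1 k).le (x k)
    (hsub _ hJball) ⟨xb, hxb⟩

theorem stmt18 (A : H → Set H) (hA : MaxMonotone A) (hz : ∃ x : H, (0 : H) ∈ A x)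
    (c : ℕ → ℝ) (cinf : ℝ) (hcinf : 0 < cinf) (hc : ∀ k, cinf ≤ c k)
    (J : ℕ → H → H) (hJ : ∀ k, IsResolvent (c k) A (J k))
    (lam : ℕ → ℝ) (hlam0 : ∀ k, 0 < lam k) (hlam1 : ∀ k, lam k < 2)
    (x : ℕ → H) (hx : ∀ k, x (k + 1) = (1 - lam k) • x k + lam k • J k (x k))
    (xb : H) (hxb : (0 : H) ∈ A xb)
    (κ δ : ℝ) (hκ : 0 < κ) (hδ : 0 < δ)
    (hsub : ∀ z : H, ‖z - xb‖ ≤ δ →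
      Metric.infDist z {w : H | (0 : H) ∈ A w} ≤ κ * Metric.infDist (0 : H) (A z))
    (hx0 : ‖x 0 - xb‖ ≤ δ) :
    ∀ k : ℕ, ‖x k - xb‖ ≤ δ ∧
      Metric.infDist (x (k + 1)) {w : H | (0 : H) ∈ A w} ≤
        Real.sqrt (1 - lam k * (2 - lam k) / (1 + κ / c k) ^ 2) *
          Metric.infDist (x k) {w : H | (0 : H) ∈ A w} :=
  stmt18_general A hA c cinf hcinf hc J hJ lam hlam0 hlam1 x hx xb hxb κ δ hκ hsub hx0
end
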